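/- Let r ≥ 1, n ≥ 1 and s = (s_1, …, s_n) ∈ ℝ_{>0}^n with s_i ≤ s_{i+1} for 1 ≤ i ≤ n−1, and let x ∈ ℝ with s_n ≤ x. Then ε̂^{r,n}_s(x) = q^{r+n}·ε̂^{r,n}_s(q^{−r}·x). -/

import Mathlib

noncomputable section

open scoped BigOperators

open Classical in
/-- The absolute value `|y| = q^{deg y}` (and `|0| = 0`) on `A = F_q[T]`. -/
def absA (Fq : Type) [Field Fq] [Fintype Fq] (y : Polynomial Fq) : ℝ :=
  if y = 0 then 0 else (Fintype.card Fq : ℝ) ^ y.natDegree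

/-- `ε^{r,n}_s(x) = x + Σ_{y ∈ A^n, y ≠ 0} max(x − max_{1≤i≤n} |y_i|^r·s_i, 0)`.
(For each `x` only finitely many summands are nonzero, so the `tsum` agrees with the
intended sum; the inner `⨆` over the finite type `Fin n` is the maximum.) -/
def epsFun (Fq : Type) [Field Fq] [Fintype Fq] (r n : ℕ) (s : Fin n → ℝ) (x : ℝ) : ℝ :=
  x + ∑' y : {y : Fin n → Polynomial Fq // y ≠ 0},
      max (x - ⨆ i : Fin n, (absA Fq (y.1 i)) ^ r * s i) 0

/-- `δ^{r,n}(s) = ((q−1)/(q^{r+n}−1))·Σ_{i=1}^n q^{n−i}·ε^{r,i−1}_{(s_1,…,s_{i−1})}(s_i)`. -/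
def deltaFun (Fq : Type) [Field Fq] [Fintype Fq] (r n : ℕ) (s : Fin n → ℝ) : ℝ :=
  ((Fintype.card Fq : ℝ) - 1) / ((Fintype.card Fq : ℝ) ^ (r + n) - 1) *
    ∑ i : Fin n, (Fintype.card Fq : ℝ) ^ (n - 1 - (i : ℕ)) *
      epsFun Fq r i (fun j : Fin (i : ℕ) => s (Fin.castLE i.isLt.le j)) (s i)

/-- `ε̂^{r,n}_s(x) = ε^{r,n}_s(x) − δ^{r,n}(s)`. -/
def epsHat (Fq : Type) [Field Fq] [Fintype Fq] (r n : ℕ) (s : Fin n → ℝ) (x : ℝ) : ℝ :=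
  epsFun Fq r n s x - deltaFun Fq r n s

/-!
Induction on `n`, peeling off the last coordinate. Since
`max (x - max b a) 0 = max (x - a) 0 - max (min x b - a) 0`, and counting the summand `y = 0`
in `ε`, `ε^{r,n+1}_s(x) = Σ_{p ∈ A} (ε^{r,n}_{s'}(x) - ε^{r,n}_{s'}(min(x, |p|^r s_{n+1})))`
with `s' = (s_1, …, s_n)`. As `|T u| = q |u|`, the induction hypothesis turns `q^{r+n}` times
the summand of `p = u` at `q^{-r} x` into the summand of `p = T u` at `x` (up to a constant when
`u = 0`). Writing `p = T u + c` with `c ∈ F_q`, and using `|T u + c| = |T u|` for `u ≠ 0`, the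
full sum over `p` is `q` times the sum over `p = T u` minus `(q - 1) ε^{r,n}_{s'}(s_{n+1})`, the
contribution of the constants. These corrections add up to `(q^{r+n} - 1) δ^{r,n}(s)`.
-/

open Polynomial

theorem Real.iSup_fin_succ_of_nonneg {n : ℕ} (f : Fin (n + 1) → ℝ) (hf : ∀ i, 0 ≤ f i) :
    ⨆ i, f i = max (f (Fin.last n)) (⨆ i : Fin n, f i.castSucc) := by
  have hbdd := (Set.finite_range f).bddAbove
  refine le_antisymm (ciSup_le fun i => ?_) (max_le (le_ciSup hbdd _) ?_)
  · induction i using Fin.lastCases with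
    | last => exact le_max_left _ _
    | cast j =>
      exact (le_ciSup (f := fun k : Fin n => f k.castSucc) (Set.finite_range _).bddAbove j).trans
        (le_max_right _ _)
  · exact Real.iSup_le (fun j => le_ciSup hbdd _) (Real.iSup_nonneg hf)

theorem max_sub_max_zero_eq (x a b : ℝ) :
    max (x - max b a) 0 = max (x - a) 0 - max (min x b - a) 0 := by
  rcases le_total b a with hba | hab
  · rw [max_eq_right hba, max_eq_right (by linarith [min_le_right x b] : min x b - a ≤ 0),
      sub_zero]
  rcases le_total x b with hxb | hbx
  · rw [max_eq_left hab, min_eq_left hxb, max_eq_right (by linarith), sub_self]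
  · rw [max_eq_left hab, min_eq_right hbx, max_eq_left (by linarith), max_eq_left (by linarith),
      max_eq_left (by linarith)]
    ring

theorem Polynomial.divX_X_mul_add_C {R : Type*} [Semiring R] (p : R[X]) (c : R) :
    (X * p + C c).divX = p := by
  ext n
  simp [coeff_divX, coeff_X_mul]

def Polynomial.mulXAddCEquiv (R : Type*) [Semiring R] : R[X] × R ≃ R[X] where
  toFun z := X * z.1 + C z.2
  invFun p := (p.divX, p.coeff 0)
  left_inv z := by simp [divX_X_mul_add_C]
  right_inv := X_mul_divX_add

section

variable {Fq : Type} [Field Fq] [Fintype Fq]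

local notation "q" => (Fintype.card Fq : ℝ)

theorem one_lt_card_real : 1 < q := by
  exact_mod_cast Fintype.one_lt_card

@[simp]
theorem absA_zero : absA Fq 0 = 0 := if_pos rfl

theorem absA_of_ne_zero {p : Fq[X]} (hp : p ≠ 0) : absA Fq p = q ^ p.natDegree := if_neg hp

theorem absA_nonneg (p : Fq[X]) : 0 ≤ absA Fq p := by
  unfold absA
  split_ifs <;> positivity

theorem one_le_absA {p : Fq[X]} (hp : p ≠ 0) : 1 ≤ absA Fq p := by
  rw [absA_of_ne_zero hp]
  exact one_le_pow₀ one_lt_card_real.le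

theorem absA_C {c : Fq} (hc : c ≠ 0) : absA Fq (C c) = 1 := by
  rw [absA_of_ne_zero (C_ne_zero.2 hc), natDegree_C, pow_zero]

theorem absA_X_mul (p : Fq[X]) : absA Fq (X * p) = q * absA Fq p := by
  rcases eq_or_ne p 0 with rfl | hp
  · simp
  rw [absA_of_ne_zero (mul_ne_zero X_ne_zero hp), absA_of_ne_zero hp,
    natDegree_mul X_ne_zero hp, natDegree_X, pow_add, pow_one]

theorem absA_X_mul_add_C {p : Fq[X]} (hp : p ≠ 0) (c : Fq) :
    absA Fq (X * p + C c) = absA Fq (X * p) := by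
  have hne : X * p + C c ≠ 0 := fun h => hp (by simpa [h] using (divX_X_mul_add_C p c).symm)
  rw [absA_of_ne_zero hne, absA_of_ne_zero (mul_ne_zero X_ne_zero hp), natDegree_add_C]

theorem finite_setOf_absA_pow_mul_lt {r : ℕ} (hr : r ≠ 0) {t : ℝ} (ht : 0 < t) (x : ℝ) :
    {p : Fq[X] | absA Fq p ^ r * t < x}.Finite := by
  obtain ⟨D, hD⟩ := pow_unbounded_of_one_lt (x / t) (one_lt_card_real (Fq := Fq))
  have : Finite (degreeLT Fq D) := Finite.of_equiv _ (degreeLTEquiv Fq D).toEquiv.symm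
  refine (Set.toFinite (degreeLT Fq D : Set Fq[X])).subset fun p hp => ?_
  rw [SetLike.mem_coe, mem_degreeLT]
  rcases eq_or_ne p 0 with rfl | hp0
  · simp
  rw [degree_eq_natDegree hp0, Nat.cast_lt]
  have hlt : absA Fq p ^ r < x / t := by rw [lt_div_iff₀ ht]; exact hp
  have hle : absA Fq p ≤ absA Fq p ^ r := le_self_pow₀ (one_le_absA hp0) hr
  rw [absA_of_ne_zero hp0] at hle hlt
  exact (pow_lt_pow_iff_right₀ one_lt_card_real).1 (hle.trans_lt (hlt.trans hD))

theorem tsum_eq_card_mul_tsum_X_mul {g : Fq[X] → ℝ} (hg : Summable g)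
    (hg_const : ∀ u ≠ 0, ∀ c, g (X * u + C c) = g (X * u)) :
    ∑' p, g p = q * ∑' u, g (X * u) + ∑ c, (g (C c) - g 0) := by
  classical
  have hfiber : ∀ u, ∑' c, g (X * u + C c) =
      q * g (X * u) + if u = 0 then ∑ c, (g (C c) - g 0) else 0 := by
    intro u
    rw [tsum_fintype]
    rcases eq_or_ne u 0 with rfl | hu
    · simp [Finset.sum_sub_distrib]
    · simp [hg_const u hu, hu]
  have hprod : Summable fun z => g (mulXAddCEquiv Fq z) := (mulXAddCEquiv Fq).summable_iff.2 hg
  rw [← (mulXAddCEquiv Fq).tsum_eq, hprod.tsum_prod]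
  simp only [mulXAddCEquiv, Equiv.coe_fn_mk]
  have hX : Summable fun u => g (X * u) := hg.comp_injective (mul_right_injective₀ X_ne_zero)
  rw [tsum_congr hfiber, (hX.mul_left q).tsum_add (hasSum_ite_eq _ _).summable, tsum_mul_left,
    tsum_ite_eq]

def maxWeight (r : ℕ) {n : ℕ} (s : Fin n → ℝ) (y : Fin n → Fq[X]) : ℝ :=
  ⨆ i, absA Fq (y i) ^ r * s i

variable (Fq) in
/-- Unlike `epsFun`, the sum runs over all of `Aⁿ`, so that it splits along `Aⁿ⁺¹ = Aⁿ × A`. -/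
def epsSum (r n : ℕ) (s : Fin n → ℝ) (x : ℝ) : ℝ :=
  ∑' y : Fin n → Fq[X], max (x - maxWeight r s y) 0

variable {r n : ℕ}

theorem le_maxWeight (s : Fin n → ℝ) (y : Fin n → Fq[X]) (i : Fin n) :
    absA Fq (y i) ^ r * s i ≤ maxWeight r s y :=
  le_ciSup (f := fun i => absA Fq (y i) ^ r * s i) (Set.finite_range _).bddAbove i

theorem maxWeight_nonneg {s : Fin n → ℝ} (hs : ∀ i, 0 ≤ s i) (y : Fin n → Fq[X]) :
    0 ≤ maxWeight r s y :=
  Real.iSup_nonneg fun i => mul_nonneg (pow_nonneg (absA_nonneg _) _) (hs i)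

theorem maxWeight_zero (hr : r ≠ 0) (s : Fin n → ℝ) : maxWeight r s (0 : Fin n → Fq[X]) = 0 := by
  simp [maxWeight, zero_pow hr]

theorem maxWeight_snoc {s : Fin (n + 1) → ℝ} (hs : ∀ i, 0 ≤ s i) (y : Fin n → Fq[X])
    (p : Fq[X]) :
    maxWeight r s (Fin.snoc y p : Fin (n + 1) → Fq[X]) =
      max (absA Fq p ^ r * s (Fin.last n)) (maxWeight r (fun j => s j.castSucc) y) := by
  rw [maxWeight, Real.iSup_fin_succ_of_nonneg _
    fun i => mul_nonneg (pow_nonneg (absA_nonneg _) _) (hs i)]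
  simp [maxWeight]

theorem summable_max_sub_maxWeight (hr : r ≠ 0) {s : Fin n → ℝ} (hs : ∀ i, 0 < s i) (x : ℝ) :
    Summable fun y : Fin n → Fq[X] => max (x - maxWeight r s y) 0 := by
  refine summable_of_hasFiniteSupport <|
    (Set.Finite.pi fun i => finite_setOf_absA_pow_mul_lt hr (hs i) x).subset fun y hy => ?_
  have hlt : maxWeight r s y < x := by
    by_contra! h
    exact hy (max_eq_right (by linarith))
  exact Set.mem_univ_pi.2 fun i => (le_maxWeight s y i).trans_lt hlt

theorem epsSum_eq_zero_of_nonpos {s : Fin n → ℝ} (hs : ∀ i, 0 ≤ s i) {x : ℝ} (hx : x ≤ 0) :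
    epsSum Fq r n s x = 0 := by
  have : ∀ y : Fin n → Fq[X], max (x - maxWeight r s y) 0 = 0 := fun y =>
    max_eq_right (by linarith [maxWeight_nonneg (r := r) hs y])
  simp [epsSum, this]

theorem epsSum_fin_zero (s : Fin 0 → ℝ) (x : ℝ) : epsSum Fq r 0 s x = max x 0 := by
  simp [epsSum, maxWeight]

theorem epsFun_eq_epsSum (hr : r ≠ 0) {s : Fin n → ℝ} (hs : ∀ i, 0 < s i) {x : ℝ}
    (hx : 0 ≤ x) : epsFun Fq r n s x = epsSum Fq r n s x := by
  rw [epsSum, ← (summable_max_sub_maxWeight hr hs x).tsum_subtype_add_tsum_subtype_compl {0},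
    tsum_singleton (0 : Fin n → Fq[X]) fun y => max (x - maxWeight r s y) 0, maxWeight_zero hr,
    sub_zero, max_eq_left hx, epsFun]
  rfl

variable (Fq) in
/-- The part of `epsSum Fq r (n + 1) s x` coming from the `y` with last coordinate `p`, where
`s` is the first `n` weights and `t` the last one. -/
def epsSlice (r : ℕ) {n : ℕ} (s : Fin n → ℝ) (t x : ℝ) (p : Fq[X]) : ℝ :=
  epsSum Fq r n s x - epsSum Fq r n s (min x (absA Fq p ^ r * t))

theorem epsSum_succ (hr : r ≠ 0) {s : Fin (n + 1) → ℝ} (hs : ∀ i, 0 < s i) (x : ℝ) :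
    epsSum Fq r (n + 1) s x =
      ∑' p, epsSlice Fq r (fun j => s j.castSucc) (s (Fin.last n)) x p := by
  have hs' : ∀ j : Fin n, 0 < s j.castSucc := fun j => hs _
  have hsum : Summable fun z => max (x - maxWeight r s (Fin.snocEquiv (fun _ => Fq[X]) z)) 0 :=
    (Fin.snocEquiv fun _ => Fq[X]).summable_iff.2 (summable_max_sub_maxWeight hr hs x)
  rw [epsSum, ← (Fin.snocEquiv fun _ => Fq[X]).tsum_eq, hsum.tsum_prod]
  refine tsum_congr fun p => ?_
  rw [epsSlice, epsSum, epsSum, ← (summable_max_sub_maxWeight hr hs' _).tsum_sub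
    (summable_max_sub_maxWeight hr hs' _)]
  refine tsum_congr fun y => ?_
  simp only [Fin.snocEquiv, Equiv.coe_fn_mk]
  rw [maxWeight_snoc (fun i => (hs i).le), max_sub_max_zero_eq]

theorem summable_epsSlice (hr : r ≠ 0) (s : Fin n → ℝ) {t : ℝ} (ht : 0 < t) (x : ℝ) :
    Summable (epsSlice Fq r s t x) := by
  refine summable_of_hasFiniteSupport <|
    (finite_setOf_absA_pow_mul_lt hr ht x).subset fun p hp =>
      lt_of_not_ge fun hle => hp (by rw [epsSlice, min_eq_left hle, sub_self])

theorem epsSlice_X_mul_add_C (s : Fin n → ℝ) (t x : ℝ) {u : Fq[X]} (hu : u ≠ 0) (c : Fq) :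
    epsSlice Fq r s t x (X * u + C c) = epsSlice Fq r s t x (X * u) := by
  rw [epsSlice, epsSlice, absA_X_mul_add_C hu]

theorem tsum_epsSlice (hr : r ≠ 0) {s : Fin n → ℝ} (hs : ∀ i, 0 ≤ s i) {t x : ℝ} (ht : 0 < t)
    (htx : t ≤ x) :
    ∑' p, epsSlice Fq r s t x p =
      q * ∑' u, epsSlice Fq r s t x (X * u) - (q - 1) * epsSum Fq r n s t := by
  classical
  have hconst : ∀ c : Fq, epsSlice Fq r s t x (C c) - epsSlice Fq r s t x 0 =
      -epsSum Fq r n s t + if c = 0 then epsSum Fq r n s t else 0 := by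
    intro c
    rcases eq_or_ne c 0 with rfl | hc
    · simp
    · rw [epsSlice, epsSlice, absA_C hc, absA_zero, zero_pow hr, zero_mul, one_pow, one_mul,
        min_eq_right htx, epsSum_eq_zero_of_nonpos hs (min_le_right x 0), if_neg hc]
      ring
  rw [tsum_eq_card_mul_tsum_X_mul (summable_epsSlice hr s ht x)
    (fun u hu c => epsSlice_X_mul_add_C s t x hu c), Finset.sum_congr rfl fun c _ => hconst c,
    Finset.sum_add_distrib, Finset.sum_const, Finset.card_univ, Finset.sum_ite_eq',
    if_pos (Finset.mem_univ _), nsmul_eq_mul]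
  ring

open Classical in
theorem card_pow_mul_epsSlice_inv_mul (hr : r ≠ 0) {s : Fin n → ℝ} (hs : ∀ i, 0 ≤ s i)
    {t x K : ℝ} (ht : 0 ≤ t) (htx : t ≤ x)
    (hscale : ∀ w, t ≤ w → q ^ (r + n) * epsSum Fq r n s ((q ^ r)⁻¹ * w) = epsSum Fq r n s w + K)
    (u : Fq[X]) :
    q ^ (r + n) * epsSlice Fq r s t ((q ^ r)⁻¹ * x) u =
      epsSlice Fq r s t x (X * u) + if u = 0 then K else 0 := by
  rcases eq_or_ne u 0 with rfl | hu
  · simp only [epsSlice, mul_zero, absA_zero, zero_pow hr, zero_mul, ↓reduceIte,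
      epsSum_eq_zero_of_nonpos hs (min_le_right _ _), sub_zero, hscale x htx]
  have hw : t ≤ min x (absA Fq (X * u) ^ r * t) :=
    le_min htx (le_mul_of_one_le_left ht
      (one_le_pow₀ (one_le_absA (mul_ne_zero X_ne_zero hu))))
  have hmin : min ((q ^ r)⁻¹ * x) (absA Fq u ^ r * t) =
      (q ^ r)⁻¹ * min x (absA Fq (X * u) ^ r * t) := by
    have : (q ^ r)⁻¹ * (absA Fq (X * u) ^ r * t) = absA Fq u ^ r * t := by
      rw [absA_X_mul, mul_pow]
      field_simp
    rw [mul_min_of_nonneg _ _ (by positivity), this]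
  rw [epsSlice, epsSlice, hmin, if_neg hu, add_zero, mul_sub, hscale x htx, hscale _ hw]
  ring

variable (Fq) in
def deltaSum (r n : ℕ) (s : Fin n → ℝ) : ℝ :=
  ∑ i : Fin n, q ^ (n - 1 - (i : ℕ)) *
    epsFun Fq r i (fun j : Fin (i : ℕ) => s (Fin.castLE i.isLt.le j)) (s i)

theorem deltaFun_eq_div_mul_deltaSum (s : Fin n → ℝ) :
    deltaFun Fq r n s = (q - 1) / (q ^ (r + n) - 1) * deltaSum Fq r n s :=
  rfl

theorem deltaSum_succ (s : Fin (n + 1) → ℝ) :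
    deltaSum Fq r (n + 1) s =
      q * deltaSum Fq r n (fun j => s j.castSucc) +
        epsFun Fq r n (fun j => s j.castSucc) (s (Fin.last n)) := by
  rw [deltaSum, Fin.sum_univ_castSucc, deltaSum, Finset.mul_sum]
  congr 1
  · refine Finset.sum_congr rfl fun i _ => ?_
    rw [show n + 1 - 1 - (i.castSucc : ℕ) = n - 1 - i + 1 by simp; omega, pow_succ',
      mul_assoc]
    rfl
  · show q ^ (n + 1 - 1 - n) * _ = _
    rw [Nat.add_sub_cancel, Nat.sub_self, pow_zero, one_mul]
    rfl

open Classical in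
theorem card_pow_mul_epsSum_inv_mul (hr : r ≠ 0) {s : Fin n → ℝ} (hs : ∀ i, 0 < s i)
    (hmono : Monotone s) {x : ℝ} (hx : 0 ≤ x) (hsx : ∀ i, s i ≤ x) :
    q ^ (r + n) * epsSum Fq r n s ((q ^ r)⁻¹ * x) =
      epsSum Fq r n s x + (q - 1) * deltaSum Fq r n s := by
  induction n generalizing x with
  | zero =>
    rw [epsSum_fin_zero, epsSum_fin_zero, max_eq_left hx, max_eq_left (by positivity)]
    simp [deltaSum]
  | succ n ih =>
    set s' : Fin n → ℝ := fun j => s j.castSucc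
    set t := s (Fin.last n)
    have ht : 0 < t := hs _
    have hs' : ∀ j, 0 < s' j := fun j => hs _
    have hscale : ∀ w, t ≤ w → q ^ (r + n) * epsSum Fq r n s' ((q ^ r)⁻¹ * w) =
        epsSum Fq r n s' w + (q - 1) * deltaSum Fq r n s' := fun w hw =>
      ih hs' (hmono.comp Fin.strictMono_castSucc.monotone) (ht.le.trans hw)
        fun j => (hmono (Fin.le_last _)).trans hw
    have hslice := card_pow_mul_epsSlice_inv_mul hr (fun j => (hs' j).le) ht.le (hsx _) hscale
    have hsumX : Summable fun u => epsSlice Fq r s' t x (X * u) :=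
      (summable_epsSlice hr s' ht x).comp_injective (mul_right_injective₀ X_ne_zero)
    calc q ^ (r + (n + 1)) * epsSum Fq r (n + 1) s ((q ^ r)⁻¹ * x)
        = q * ∑' u, q ^ (r + n) * epsSlice Fq r s' t ((q ^ r)⁻¹ * x) u := by
          rw [epsSum_succ hr hs, tsum_mul_left, ← add_assoc, pow_succ]
          ring
      _ = q * (∑' u, epsSlice Fq r s' t x (X * u) + (q - 1) * deltaSum Fq r n s') := by
          rw [tsum_congr hslice, hsumX.tsum_add (hasSum_ite_eq _ _).summable, tsum_ite_eq]
      _ = epsSum Fq r (n + 1) s x + (q - 1) * deltaSum Fq r (n + 1) s := by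
          rw [epsSum_succ hr hs, tsum_epsSlice hr (fun j => (hs' j).le) ht (hsx _), deltaSum_succ,
            epsFun_eq_epsSum hr hs' ht.le]
          ring

end

/-- Let `r ≥ 1`, `n ≥ 1` and `s ∈ ℝ_{>0}^n` be nondecreasing, and let
`x ∈ ℝ` with `s_n ≤ x`.  Then `ε̂^{r,n}_s(x) = q^{r+n}·ε̂^{r,n}_s(q^{−r}·x)`. -/
theorem statement11 (Fq : Type) [Field Fq] [Fintype Fq]
    (r n : ℕ) (hr : 1 ≤ r) (hn : 1 ≤ n) (s : Fin n → ℝ) (hs : ∀ i, 0 < s i)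
    (hmono : Monotone s) (x : ℝ) (hx : s ⟨n - 1, by omega⟩ ≤ x) :
    epsHat Fq r n s x =
      (Fintype.card Fq : ℝ) ^ (r + n) *
        epsHat Fq r n s (((Fintype.card Fq : ℝ) ^ r)⁻¹ * x) := by
  have hr0 : r ≠ 0 := by omega
  have hsx : ∀ i, s i ≤ x := fun i =>
    (hmono (Fin.le_def.2 (Nat.le_sub_one_of_lt i.isLt))).trans hx
  have hx0 : 0 ≤ x := (hs _).le.trans hx
  have hscale := card_pow_mul_epsSum_inv_mul (Fq := Fq) hr0 hs hmono hx0 hsx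
  rw [← epsFun_eq_epsSum hr0 hs hx0, ← epsFun_eq_epsSum hr0 hs (by positivity)] at hscale
  have hden : (Fintype.card Fq : ℝ) ^ (r + n) - 1 ≠ 0 :=
    (sub_pos.2 (one_lt_pow₀ (one_lt_card_real (Fq := Fq)) (by omega))).ne'
  have hcoef := div_mul_cancel₀ ((Fintype.card Fq : ℝ) - 1) hden
  rw [epsHat, epsHat, deltaFun_eq_div_mul_deltaSum]
  linear_combination -hscale + deltaSum Fq r n s * hcoef
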